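/- arXiv:2512.10425 — 4 statements merged into one kernel-verified Lean document; each statement's English description precedes it below -/
import Mathlib

section
/- With the notation of the previous statement and assuming η̄_r ≠ 0, setting γ_i = γ̄_i / η̄_r and η_j = η̄_j / η̄_r for 1 ≤ j ≤ r − 1, the last global parity satisfies G_r = Σ_{i=1}^k γ_i D_i + Σ_{j=1}^{r−1} η_j G_j, and all coefficients γ_i, η_j are nonzero. -/
/-!
Evaluating the Lagrange interpolant of the constant `1` at the nodes `b` gives the partial fraction
identity `∑ j, η̄ j / (x - b j) = ∏ z, (x - b z)⁻¹`. Taking `x = a i` and summing against the data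
shows `∑ j, η̄ j • G j = -∑ i, γ̄ i • D i`; in characteristic 2 the sign disappears, and solving for
`G r` gives the decomposition. All coefficients are products of inverses of nonzero differences.
-/

open Finset Lagrange

namespace Lagrange

variable {F : Type*} [Field F] {ι : Type*} [DecidableEq ι] {s : Finset ι} {v : ι → F} {x : F}

theorem sum_nodalWeight_mul_inv_sub (hvs : Set.InjOn v s) (hs : s.Nonempty)
    (hx : ∀ i ∈ s, x ≠ v i) :
    ∑ i ∈ s, nodalWeight s v i * (x - v i)⁻¹ = ∏ i ∈ s, (x - v i)⁻¹ := by
  have h := eval_interpolate_not_at_node 1 hx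
  simp only [interpolate_one hvs hs, Polynomial.eval_one, Pi.one_apply, mul_one] at h
  rw [prod_inv_distrib, ← eval_nodal, eq_inv_of_mul_eq_one_right h.symm]

end Lagrange

section CauchyParity

variable {F V : Type*} [Field F] [AddCommGroup V] [Module F V]

theorem sum_nodalWeight_smul_sum_inv_sub_smul {ι κ : Type*} [Fintype ι] [Fintype κ]
    [DecidableEq κ] [Nonempty κ] {a : ι → F} {b : κ → F} (hb : Function.Injective b)
    (hab : ∀ i j, a i ≠ b j) (D : ι → V) :
    ∑ j, nodalWeight univ b j • ∑ i, (b j - a i)⁻¹ • D i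
      = -∑ i, (∏ z, (a i - b z)⁻¹) • D i := by
  simp_rw [smul_sum, smul_smul]
  rw [sum_comm, ← sum_neg_distrib]
  refine sum_congr rfl fun i _ => ?_
  rw [← sum_smul, ← neg_smul, ← sum_nodalWeight_mul_inv_sub hb.injOn univ_nonempty
    fun j _ => hab i j, ← sum_neg_distrib]
  simp_rw [← neg_sub (a i), inv_neg, mul_neg]

end CauchyParity

theorem stmt4_general {F V : Type*} [Field F] [CharP F 2] [AddCommGroup V] [Module F V]
    {k r : ℕ} (a : Fin k → F) (b : Fin (r + 1) → F)
    (hab : Function.Injective (Sum.elim a b)) (D : Fin k → V)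
    (G : Fin (r + 1) → V) (hG : ∀ j, G j = ∑ i, (b j - a i)⁻¹ • D i)
    (γbar : Fin k → F) (hγbar : ∀ i, γbar i = ∏ z, (a i - b z)⁻¹)
    (ηbar : Fin (r + 1) → F)
    (hηbar : ∀ j, ηbar j = ∏ z ∈ Finset.univ.erase j, (b j - b z)⁻¹) :
    (G (Fin.last r) = ∑ i, (γbar i / ηbar (Fin.last r)) • D i
        + ∑ j : Fin r, (ηbar j.castSucc / ηbar (Fin.last r)) • G j.castSucc)
      ∧ (∀ i, γbar i / ηbar (Fin.last r) ≠ 0)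
      ∧ (∀ j : Fin r, ηbar j.castSucc / ηbar (Fin.last r) ≠ 0) := by
  obtain ⟨-, hb, hab⟩ := Sum.elim_injective.mp hab
  have hη : ∀ j, ηbar j ≠ 0 := fun j => hηbar j ▸ nodalWeight_ne_zero hb.injOn (mem_univ j)
  have hγ : ∀ i, γbar i ≠ 0 := by
    simp [hγbar, prod_ne_zero_iff, sub_eq_zero, hab]
  have hlast := hη (Fin.last r)
  refine ⟨?_, fun i => div_ne_zero (hγ i) hlast, fun j => div_ne_zero (hη _) hlast⟩
  have hrel := sum_nodalWeight_smul_sum_inv_sub_smul hb hab D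
  simp only [nodalWeight, ← hηbar, ← hγbar, ← hG, Fin.sum_univ_castSucc] at hrel
  have hneg : ∀ v : V, -v = v := fun v => by rw [← neg_one_smul F v, CharTwo.neg_eq, one_smul]
  have hlastG : ηbar (Fin.last r) • G (Fin.last r)
      = ∑ i, γbar i • D i + ∑ j : Fin r, ηbar j.castSucc • G j.castSucc := by
    rw [← hneg (_ + _), neg_add, ← hrel]
    abel
  rw [← inv_smul_smul₀ hlast (G _), hlastG]
  simp only [smul_add, smul_sum, smul_smul, div_eq_inv_mul]

/-- Equation (11): decomposition of the last global parity with all-nonzero coefficients. -/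
theorem stmt4 {F V : Type*} [Field F] [CharP F 2] [AddCommGroup V] [Module F V]
    {k r : ℕ} (a : Fin k → F) (b : Fin (r + 1) → F)
    (hab : Function.Injective (Sum.elim a b)) (D : Fin k → V)
    (G : Fin (r + 1) → V) (hG : ∀ j, G j = ∑ i, (b j - a i)⁻¹ • D i)
    (γbar : Fin k → F) (hγbar : ∀ i, γbar i = ∏ z, (a i - b z)⁻¹)
    (ηbar : Fin (r + 1) → F)
    (hηbar : ∀ j, ηbar j = ∏ z ∈ Finset.univ.erase j, (b j - b z)⁻¹)
    (hlast : ηbar (Fin.last r) ≠ 0) :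
    (G (Fin.last r) = ∑ i, (γbar i / ηbar (Fin.last r)) • D i
        + ∑ j : Fin r, (ηbar j.castSucc / ηbar (Fin.last r)) • G j.castSucc)
      ∧ (∀ i, γbar i / ηbar (Fin.last r) ≠ 0)
      ∧ (∀ j : Fin r, ηbar j.castSucc / ηbar (Fin.last r) ≠ 0) :=
  stmt4_general a b hab D G hG γbar hγbar ηbar hηbar
end

section
/- With the CP-Azure construction (k = pg, L_m = Σ_{i∈group m} β_i D_i, G_r = Σ_m L_m), the extended code does not tolerate all sets of r + 1 erasures: specifically, there exists a codeword supported on r + 1 data coordinates within a single local group together with the dependent parity relations, exhibiting distance exactly r + 1 when g ≥ r + 1. -/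
/-!
Clearing denominators, `∑ i ∈ S, D i / (x - a i) = P x / ∏ i ∈ S, (x - a i)` with
`deg P < #S` and `P (a i)` a nonzero multiple of `D i`. So a nonzero `D` supported on `S`
annihilates at most `#S - 1` of the Cauchy parities, and data plus global parities already have
weight at least `r + 2`. Conversely, a nonzero `D` on `r + 2` positions of one local group can kill
all `r + 1` global parities; its local parities vanish as well, because `L m` is the last global
parity restricted to group `m`, so this codeword has weight exactly `r + 2`.
-/

open Finset Polynomial Matrix

theorem hammingNorm_sumElim {α β γ : Type*} [Fintype α] [Fintype β] [Zero γ] [DecidableEq γ]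
    (f : α → γ) (g : β → γ) :
    hammingNorm (Sum.elim f g) = hammingNorm f + hammingNorm g := by
  simp only [hammingNorm, card_filter, Fintype.sum_sum_type, Sum.elim_inl, Sum.elim_inr]
  congr

section Cauchy

variable {F ι κ : Type*} [Field F] {a : ι → F} {b : κ → F}

theorem Lagrange.eval_sum_C_mul_nodal_erase [DecidableEq ι] (S : Finset ι) (D : ι → F) {x : F}
    (hx : ∀ i ∈ S, x ≠ a i) :
    (∑ i ∈ S, C (D i) * Lagrange.nodal (S.erase i) a).eval x =
      (∏ i ∈ S, (x - a i)) * ∑ i ∈ S, (x - a i)⁻¹ * D i := by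
  simp only [eval_finsetSum, eval_mul, eval_C, Lagrange.eval_nodal, mul_sum]
  refine sum_congr rfl fun i hi => ?_
  rw [← mul_prod_erase S (fun i' => x - a i') hi]
  have := sub_ne_zero.2 (hx i hi)
  field_simp

theorem Lagrange.eval_sum_C_mul_nodal_erase_node [DecidableEq ι] {S : Finset ι} (D : ι → F)
    {i : ι} (hi : i ∈ S) :
    (∑ i ∈ S, C (D i) * Lagrange.nodal (S.erase i) a).eval (a i) =
      D i * ∏ i' ∈ S.erase i, (a i - a i') := by
  rw [eval_finsetSum, sum_eq_single_of_mem i hi, eval_mul, eval_C, Lagrange.eval_nodal]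
  intro i' hi' hne
  rw [eval_mul, Lagrange.eval_nodal_at_node (mem_erase.2 ⟨fun h => hne h.symm, hi⟩), mul_zero]

theorem eq_zero_of_sum_inv_sub_mul_eq_zero {S : Finset ι} {T : Finset κ}
    (ha : Set.InjOn a S) (hb : Set.InjOn b T) (hab : ∀ i ∈ S, ∀ j ∈ T, b j ≠ a i)
    (hST : #S ≤ #T) {D : ι → F} (hD : ∀ j ∈ T, ∑ i ∈ S, (b j - a i)⁻¹ * D i = 0) :
    ∀ i ∈ S, D i = 0 := by
  classical
  intro i hi
  set P : F[X] := ∑ i ∈ S, C (D i) * Lagrange.nodal (S.erase i) a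
  have hdeg : P.natDegree < #T := by
    refine lt_of_le_of_lt (natDegree_sum_le_of_forall_le _ _ (n := #S - 1) fun i hi => ?_) ?_
    · refine (natDegree_C_mul_le _ _).trans ?_
      rw [Lagrange.natDegree_nodal, card_erase_of_mem hi]
    · have := card_pos.2 ⟨i, hi⟩
      omega
  have hP : P = 0 := by
    refine eq_zero_of_degree_lt_of_eval_index_eq_zero T hb
      (degree_le_natDegree.trans_lt (WithBot.coe_lt_coe.2 hdeg)) fun j hj => ?_
    rw [Lagrange.eval_sum_C_mul_nodal_erase S D fun i hi => hab i hi j hj, hD j hj, mul_zero]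
  have hnode : P.eval (a i) = _ := Lagrange.eval_sum_C_mul_nodal_erase_node D hi
  rw [hP, eval_zero, eq_comm, mul_eq_zero] at hnode
  refine hnode.resolve_right (prod_ne_zero_iff.2 fun i' hi' => sub_ne_zero.2 fun h => ?_)
  exact (mem_erase.1 hi').1 (ha (mem_erase.1 hi').2 hi h.symm)


theorem card_lt_hammingNorm_add_hammingNorm_cauchy [Fintype ι] [Fintype κ] [DecidableEq F]
    (ha : Function.Injective a) (hb : Function.Injective b) (hab : ∀ i j, b j ≠ a i)
    {D : ι → F} (hD : D ≠ 0) :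
    Fintype.card κ < hammingNorm D + hammingNorm (fun j => ∑ i, (b j - a i)⁻¹ * D i) := by
  set S : Finset ι := {i | D i ≠ 0}
  set T : Finset κ := {j | ∑ i, (b j - a i)⁻¹ * D i = 0}
  have hsum : ∀ j, ∑ i ∈ S, (b j - a i)⁻¹ * D i = ∑ i, (b j - a i)⁻¹ * D i := fun j =>
    sum_filter_of_ne fun i _ h => right_ne_zero_of_mul h
  have hTS : #T < #S := by
    by_contra! hST
    obtain ⟨i, hi⟩ := Function.ne_iff.1 hD
    exact hi <| eq_zero_of_sum_inv_sub_mul_eq_zero ha.injOn hb.injOn (fun i _ j _ => hab i j) hST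
      (fun j hj => (hsum j).trans (mem_filter.1 hj).2) i (mem_filter.2 ⟨mem_univ i, hi⟩)
  have hcard : #T + hammingNorm (fun j => ∑ i, (b j - a i)⁻¹ * D i) = Fintype.card κ :=
    card_filter_add_card_filter_not _
  have hS : hammingNorm D = #S := rfl
  omega

end Cauchy

theorem Matrix.exists_ne_zero_mulVec_eq_zero_of_support_subset {K m n : Type*} [Field K]
    [Fintype m] [Fintype n] (M : Matrix m n K) (s : Finset n) (hs : Fintype.card m < #s) :
    ∃ v ≠ 0, (∀ i, v i ≠ 0 → i ∈ s) ∧ M *ᵥ v = 0 := by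
  let e := Function.ExtendByZero.linearMap K ((↑) : s → n)
  have hker : LinearMap.ker (M.mulVecLin ∘ₗ e) ≠ ⊥ :=
    LinearMap.ker_ne_bot_of_finrank_lt (by simpa using hs)
  obtain ⟨w, hw, hw0⟩ := (Submodule.ne_bot_iff _).1 hker
  refine ⟨e w, ?_, fun i hi => ?_, hw⟩
  · refine fun h => hw0 (funext fun x => ?_)
    simpa [e, Subtype.val_injective.extend_apply] using congrFun h x
  · by_contra his
    exact hi (Function.extend_apply' _ _ _ fun ⟨x, hx⟩ => his (hx ▸ x.2))

theorem Fintype.sum_slice_eq_zero {α β M : Type*} [Fintype α] [Fintype β] [AddCommMonoid M]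
    {f : α × β → M} {m : α} (hf : ∀ i, f i ≠ 0 → i.1 = m) (h0 : ∑ i, f i = 0)
    (m' : α) : ∑ t, f (m', t) = 0 := by
  have hslice : ∀ m' ≠ m, ∑ t, f (m', t) = 0 := fun m' hm' =>
    Finset.sum_eq_zero fun t _ => by_contra fun h => hm' (hf _ h)
  by_cases hm : m' = m
  · subst hm
    rwa [Fintype.sum_prod_type, Fintype.sum_eq_single m' hslice] at h0
  · exact hslice m' hm

theorem stmt12_general {F : Type*} [Field F] [DecidableEq F] {p g r : ℕ}
    (hp : 0 < p)
    (a : Fin p × Fin g → F) (b : Fin (r + 1) → F)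
    (hab : Function.Injective (Sum.elim a b))
    (hg : r + 2 ≤ g)
    (ext : (Fin p × Fin g → F) → ((Fin p × Fin g) ⊕ (Fin (r + 1) ⊕ Fin p) → F))
    (hext : ∀ D, ext D = Sum.elim D (Sum.elim
        (fun j => ∑ i, (b j - a i)⁻¹ * D i)
        (fun m => ∑ t : Fin g, (b (Fin.last r) - a (m, t))⁻¹ * D (m, t)))) :
    (∃ D : Fin p × Fin g → F, D ≠ 0 ∧ (∃ m, ∀ i, D i ≠ 0 → i.1 = m) ∧
        hammingNorm (ext D) = r + 2) ∧
    (∀ D : Fin p × Fin g → F, D ≠ 0 → r + 2 ≤ hammingNorm (ext D)) := by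
  have lower (D : Fin p × Fin g → F) (hD : D ≠ 0) : r + 2 ≤ hammingNorm (ext D) := by
    have := card_lt_hammingNorm_add_hammingNorm_cauchy (a := a) (b := b)
      (hab.comp Sum.inl_injective) (hab.comp Sum.inr_injective)
      (fun i j h => Sum.inr_ne_inl (hab h)) hD
    rw [Fintype.card_fin] at this
    rw [hext, hammingNorm_sumElim, hammingNorm_sumElim]
    omega
  refine ⟨?_, lower⟩
  obtain ⟨T, -, hT⟩ := exists_subset_card_eq (s := (univ : Finset (Fin g))) (n := r + 2)
    (by simpa using hg)
  let m : Fin p := ⟨0, hp⟩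
  obtain ⟨D, hD0, hsupp, hG : (fun j => ∑ i, (b j - a i)⁻¹ * D i) = 0⟩ :=
    exists_ne_zero_mulVec_eq_zero_of_support_subset (of fun j i => (b j - a i)⁻¹) ({m} ×ˢ T)
      (by simp [hT])
  have hm (i) (hi : D i ≠ 0) : i.1 = m := mem_singleton.1 (mem_product.1 (hsupp i hi)).1
  have hL : (fun m' => ∑ t : Fin g, (b (Fin.last r) - a (m', t))⁻¹ * D (m', t)) = 0 :=
    funext (Fintype.sum_slice_eq_zero (fun i hi => hm i (right_ne_zero_of_mul hi))
      (congrFun hG (Fin.last r)))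
  refine ⟨D, hD0, ⟨m, hm⟩, le_antisymm ?_ (lower D hD0)⟩
  have hDs : hammingNorm D ≤ #({m} ×ˢ T) :=
    card_le_card fun i hi => hsupp i (mem_filter.1 hi).2
  rw [card_product, card_singleton, hT, one_mul] at hDs
  rw [hext, hammingNorm_sumElim, hammingNorm_sumElim, hL, hG]
  simpa only [hammingNorm_zero, add_zero] using hDs

/-- The (k, r, p) CP-Azure code has minimum distance exactly r+1 when g ≥ r+1.
    (Here the number of global parities is `r + 1`, so the distance is `r + 2`.) -/
theorem stmt12 {F : Type*} [Field F] [CharP F 2] [DecidableEq F] {p g r : ℕ}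
    (hp : 0 < p)
    (a : Fin p × Fin g → F) (b : Fin (r + 1) → F)
    (hab : Function.Injective (Sum.elim a b))
    (hg : r + 2 ≤ g)
    (ext : (Fin p × Fin g → F) → ((Fin p × Fin g) ⊕ (Fin (r + 1) ⊕ Fin p) → F))
    (hext : ∀ D, ext D = Sum.elim D (Sum.elim
        (fun j => ∑ i, (b j - a i)⁻¹ * D i)
        (fun m => ∑ t : Fin g, (b (Fin.last r) - a (m, t))⁻¹ * D (m, t)))) :
    (∃ D : Fin p × Fin g → F, D ≠ 0 ∧ (∃ m, ∀ i, D i ≠ 0 → i.1 = m) ∧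
        hammingNorm (ext D) = r + 2) ∧
    (∀ D : Fin p × Fin g → F, D ≠ 0 → r + 2 ≤ hammingNorm (ext D)) :=
  stmt12_general hp a b hab hg ext hext
end

section
/- In the CP-Azure code with r global parities and p local groups, if r + i coordinates are erased (1 ≤ i ≤ p) such that exactly i of the erased coordinates are data blocks lying in i distinct local groups, each of which has no other erased data coordinate, and the surviving blocks include all p local parities and all r global parities, then all erased coordinates can be recovered. -/
open Polynomial Finset

/-- Cauchy-matrix injectivity, via polynomials. -/
theorem cauchy_inj {F : Type*} [Field F] {ι : Type*} [DecidableEq ι] {r : ℕ}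
    (a : ι → F) (b : Fin (r + 1) → F)
    (S : Finset ι) (hScard : S.card ≤ r + 1)
    (hainj : Set.InjOn a S) (hbinj : Function.Injective b)
    (hne : ∀ j, ∀ x ∈ S, b j - a x ≠ 0)
    (v : ι → F)
    (hglob : ∀ j : Fin (r + 1), ∑ x ∈ S, (b j - a x)⁻¹ * v x = 0) :
    ∀ x ∈ S, v x = 0 := by
  set P : F[X] := ∑ x ∈ S, Polynomial.C (v x) *
      ∏ y ∈ S.erase x, (Polynomial.X - Polynomial.C (a y)) with hP
  have hdeg : P.degree < (r + 1 : ℕ) := by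
    apply lt_of_le_of_lt (Polynomial.degree_sum_le _ _)
    apply Finset.sup_lt_iff (by exact_mod_cast WithBot.bot_lt_coe (r + 1)) |>.2
    intro x hx
    calc (Polynomial.C (v x) * ∏ y ∈ S.erase x, (Polynomial.X - Polynomial.C (a y))).degree
        ≤ 0 + (S.erase x).card := by
          apply le_trans (Polynomial.degree_mul_le _ _)
          gcongr
          · exact Polynomial.degree_C_le
          · apply le_trans (Polynomial.degree_prod_le _ _)
            apply le_trans (Finset.sum_le_card_nsmul _ _ 1 ?_)
            · simp
            · intro y _; exact Polynomial.degree_X_sub_C_le _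
      _ < (r + 1 : ℕ) := by
          rw [zero_add]
          exact_mod_cast lt_of_lt_of_le (Finset.card_erase_lt_of_mem hx) hScard
  have hPzero : P = 0 := by
    apply Polynomial.eq_zero_of_degree_lt_of_eval_index_eq_zero
      (Finset.univ : Finset (Fin (r + 1))) (hbinj.injOn)
    · simpa using hdeg
    · intro j _
      have heval : P.eval (b j) =
          ∑ x ∈ S, v x * ∏ y ∈ S.erase x, (b j - a y) := by
        simp [hP, Polynomial.eval_finset_sum, Polynomial.eval_prod]
      have hfac : ∀ x ∈ S, v x * ∏ y ∈ S.erase x, (b j - a y)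
          = (∏ y ∈ S, (b j - a y)) * ((b j - a x)⁻¹ * v x) := by
        intro x hx
        rw [← Finset.prod_erase_mul _ _ hx]
        field_simp [hne j x hx]
      rw [heval, Finset.sum_congr rfl hfac, ← Finset.mul_sum, hglob j, mul_zero]
  intro x hx
  have heval : P.eval (a x) = v x * ∏ y ∈ S.erase x, (a x - a y) := by
    rw [hP, Polynomial.eval_finset_sum]
    rw [Finset.sum_eq_single x]
    · simp [Polynomial.eval_prod]
    · intro y hy hyx
      have : (∏ z ∈ S.erase y, (Polynomial.X - Polynomial.C (a z))).eval (a x) = 0 := by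
        rw [Polynomial.eval_prod]
        apply Finset.prod_eq_zero (Finset.mem_erase.2 ⟨Ne.symm hyx, hx⟩)
        simp
      simp [this]
    · intro h; exact absurd hx h
  have hprodne : (∏ y ∈ S.erase x, (a x - a y)) ≠ 0 := by
    apply Finset.prod_ne_zero_iff.2
    intro y hy
    rcases Finset.mem_erase.1 hy with ⟨hyx, hyS⟩
    exact sub_ne_zero.2 fun h => hyx (hainj hyS hx h.symm)
  have := heval
  rw [hPzero, Polynomial.eval_zero] at this
  exact (mul_eq_zero.1 this.symm).resolve_right hprodne

/-- Failure patterns of size r+i with i lonely data erasures in i distinct groups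
    (all parities surviving) are decodable in CP-Azure.
    (Here the number of global parities is `r + 1`.) -/
theorem stmt13 {F : Type*} [Field F] [CharP F 2] {p g r : ℕ}
    (a : Fin p × Fin g → F) (b : Fin (r + 1) → F)
    (hab : Function.Injective (Sum.elim a b))
    (ext : (Fin p × Fin g → F) → ((Fin p × Fin g) ⊕ (Fin (r + 1) ⊕ Fin p) → F))
    (hext : ∀ D, ext D = Sum.elim D (Sum.elim
        (fun j => ∑ i, (b j - a i)⁻¹ * D i)
        (fun m => ∑ t : Fin g, (b (Fin.last r) - a (m, t))⁻¹ * D (m, t))))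
    (i : ℕ) (hi1 : 1 ≤ i) (hip : i ≤ p)
    (E : Finset (Fin p × Fin g)) (hE : E.card = (r + 1) + i)
    (T : Finset (Fin p × Fin g)) (hTE : T ⊆ E) (hT : T.card = i)
    (hlonely : ∀ x ∈ T, ∀ y ∈ E, y ≠ x → y.1 ≠ x.1) :
    ∀ D D' : Fin p × Fin g → F,
      (∀ c, (∀ x ∈ E, c ≠ Sum.inl x) → ext D c = ext D' c) → D = D' := by
  intro D D' h
  set Δ : Fin p × Fin g → F := fun x => D x - D' x with hΔ
  -- a and b are injective and have disjoint ranges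
  have hainj : Function.Injective a := fun x y hxy => by
    have := hab (a₁ := Sum.inl x) (a₂ := Sum.inl y) (by simpa using hxy)
    simpa using this
  have hbinj : Function.Injective b := fun x y hxy => by
    have := hab (a₁ := Sum.inr x) (a₂ := Sum.inr y) (by simpa using hxy)
    simpa using this
  have hba : ∀ j x, b j - a x ≠ 0 := by
    intro j x hzero
    have h2 : a x = b j := (sub_eq_zero.1 hzero).symm
    exact absurd (hab (a₁ := Sum.inl x) (a₂ := Sum.inr j) (by simpa using h2)) (by simp)
  -- Δ vanishes off E
  have hout : ∀ x, x ∉ E → Δ x = 0 := by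
    intro x hx
    have := h (Sum.inl x) (fun y hy hxy => hx (by rw [Sum.inl.injEq] at hxy; rwa [hxy]))
    rw [hext D, hext D'] at this
    simp only [Sum.elim_inl] at this
    simp [hΔ, this]
  -- global parity equations for Δ
  have hglob : ∀ j : Fin (r + 1), ∑ x, (b j - a x)⁻¹ * Δ x = 0 := by
    intro j
    have := h (Sum.inr (Sum.inl j)) (fun y _ => by simp)
    rw [hext D, hext D'] at this
    simp only [Sum.elim_inr, Sum.elim_inl] at this
    simp only [hΔ, mul_sub, Finset.sum_sub_distrib]
    rw [this, sub_self]
  -- local parity equations for Δ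
  have hloc : ∀ m : Fin p, ∑ t : Fin g, (b (Fin.last r) - a (m, t))⁻¹ * Δ (m, t) = 0 := by
    intro m
    have := h (Sum.inr (Sum.inr m)) (fun y _ => by simp)
    rw [hext D, hext D'] at this
    simp only [Sum.elim_inr] at this
    simp only [hΔ, mul_sub, Finset.sum_sub_distrib]
    rw [this, sub_self]
  -- Step 1: Δ vanishes on T (local recovery of lonely erasures)
  have hTzero : ∀ x ∈ T, Δ x = 0 := by
    intro x hxT
    have hsum := hloc x.1
    rw [Finset.sum_eq_single x.2] at hsum
    · have hne := hba (Fin.last r) (x.1, x.2)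
      have : (b (Fin.last r) - a (x.1, x.2))⁻¹ ≠ 0 := inv_ne_zero hne
      have hx' : Δ (x.1, x.2) = 0 := by
        rcases mul_eq_zero.1 hsum with h' | h'
        · exact absurd h' this
        · exact h'
      simpa using hx'
    · intro t _ htx
      have hnotE : (x.1, t) ∉ E := by
        intro hmem
        exact (hlonely x hxT (x.1, t) hmem (by
          intro heq
          apply htx
          rw [← heq])) rfl
      rw [hout _ hnotE, mul_zero]
    · intro habs; exact absurd (Finset.mem_univ x.2) habs
  -- Step 2: Δ supported on E \ T, which has card r + 1
  have hSsub : ∀ x, x ∉ E \ T → Δ x = 0 := by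
    intro x hx
    by_cases hxE : x ∈ E
    · have hxT : x ∈ T := by
        by_contra hT'
        exact hx (Finset.mem_sdiff.2 ⟨hxE, hT'⟩)
      exact hTzero x hxT
    · exact hout x hxE
  have hScard : (E \ T).card ≤ r + 1 := by
    rw [Finset.card_sdiff_of_subset hTE, hE, hT]
    omega
  have hglob' : ∀ j : Fin (r + 1), ∑ x ∈ E \ T, (b j - a x)⁻¹ * Δ x = 0 := by
    intro j
    rw [← hglob j]
    exact Finset.sum_subset (Finset.subset_univ _)
      (fun x _ hx => by rw [hSsub x hx, mul_zero])
  have hSzero : ∀ x ∈ E \ T, Δ x = 0 :=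
    cauchy_inj a b (E \ T) hScard (hainj.injOn) hbinj
      (fun j x _ => hba j x) Δ hglob'
  funext x
  have : Δ x = 0 := by
    by_cases hx : x ∈ E \ T
    · exact hSzero x hx
    · exact hSsub x hx
  exact sub_eq_zero.1 this
end

section
/- Consider the (6, 2) Cauchy RS code over GF(2^w) with pairwise distinct a_1,…,a_6, b_1, b_2, and let L_1 = Σ_{i=1}^3 α_{i,2} D_i and L_2 = Σ_{i=4}^6 α_{i,2} D_i where α_{i,2} = (b_2 − a_i)^{−1}. Then L_1 + L_2 = G_2, and moreover the map (D_1,…,D_6) ↦ (D_1,…,D_6, G_1, G_2, L_1, L_2) is injective with the property that the 10-coordinate images of distinct inputs differ in at least 3 coordinates. -/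
lemma three_le_filter_card {α : Type*} [Fintype α] [DecidableEq α]
    (p : α → Prop) [DecidablePred p] (x y z : α)
    (hxy : x ≠ y) (hxz : x ≠ z) (hyz : y ≠ z)
    (hx : p x) (hy : p y) (hz : p z) :
    3 ≤ (Finset.univ.filter p).card := by
  have hsub : ({x, y, z} : Finset α) ⊆ Finset.univ.filter p := by
    intro t ht
    simp only [Finset.mem_insert, Finset.mem_singleton] at ht
    rcases ht with rfl | rfl | rfl <;> simp [hx, hy, hz]
  have hcard : ({x, y, z} : Finset α).card = 3 := by
    rw [Finset.card_insert_of_notMem (by simp [hxy, hxz]),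
        Finset.card_insert_of_notMem (by simp [hyz]), Finset.card_singleton]
  exact hcard ▸ Finset.card_le_card hsub

/-- The concrete (6, 2, 2) CP-Azure instance: L₁ + L₂ = G₂ and distance ≥ 3. -/
theorem stmt15 {F : Type*} [Field F] [CharP F 2] [Fintype F] [DecidableEq F]
    (hcard : 8 ≤ Fintype.card F)
    (a : Fin 6 → F) (b : Fin 2 → F)
    (hab : Function.Injective (Sum.elim a b))
    (G : (Fin 6 → F) → Fin 2 → F)
    (hG : ∀ D j, G D j = ∑ i, (b j - a i)⁻¹ * D i)
    (L : (Fin 6 → F) → Fin 2 → F)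
    (hL : ∀ D m, L D m = ∑ t : Fin 3,
        (b 1 - a ⟨m.val * 3 + t.val, by have h1 := m.2; have h2 := t.2; omega⟩)⁻¹ *
          D ⟨m.val * 3 + t.val, by have h1 := m.2; have h2 := t.2; omega⟩)
    (ext : (Fin 6 → F) → (Fin 6 ⊕ (Fin 2 ⊕ Fin 2)) → F)
    (hext : ∀ D, ext D = Sum.elim D (Sum.elim (G D) (L D))) :
    (∀ D, L D 0 + L D 1 = G D 1) ∧
    Function.Injective ext ∧
    (∀ D D', D ≠ D' → 3 ≤ hammingDist (ext D) (ext D')) := by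
  have hba : ∀ (j : Fin 2) (i : Fin 6), b j - a i ≠ 0 := by
    intro j i h
    have h' : Sum.elim a b (Sum.inl i) = Sum.elim a b (Sum.inr j) := by
      simpa using (sub_eq_zero.mp h).symm
    simpa using hab h'
  have haa : ∀ i k : Fin 6, i ≠ k → a i - a k ≠ 0 := by
    intro i k hik h
    exact hik (by simpa using hab (show Sum.elim a b (Sum.inl i) = Sum.elim a b (Sum.inl k) by
      simpa using sub_eq_zero.mp h))
  have hbb : b 0 - b 1 ≠ 0 := by
    intro h
    have := hab (show Sum.elim a b (Sum.inr 0) = Sum.elim a b (Sum.inr 1) by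
      simpa using sub_eq_zero.mp h)
    simp at this
  refine ⟨?_, ?_, ?_⟩
  · intro D
    rw [hL, hL, hG, Fin.sum_univ_three, Fin.sum_univ_three, Fin.sum_univ_six]
    norm_num [show (⟨2, by norm_num⟩ : Fin 6) = 2 from rfl,
      show (⟨3, by norm_num⟩ : Fin 6) = 3 from rfl,
      show (⟨4, by norm_num⟩ : Fin 6) = 4 from rfl,
      show (⟨5, by norm_num⟩ : Fin 6) = 5 from rfl]
    ring
  · intro D D' h
    funext i
    have := congrFun h (Sum.inl i)
    rw [hext, hext] at this
    simpa using this
  · intro D D' hne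
    unfold hammingDist
    classical
    set s := Finset.univ.filter (fun i => D i ≠ D' i) with hs
    have hsne : s.Nonempty := by
      by_contra h
      apply hne
      funext i
      by_contra hi
      exact h ⟨i, by simp [hs, hi]⟩
    have hmem : ∀ i, D i ≠ D' i ↔ i ∈ s := by intro i; simp [hs]
    have hPinl : ∀ i : Fin 6, D i ≠ D' i →
        ext D (Sum.inl i) ≠ ext D' (Sum.inl i) := by
      intro i hi; rw [hext, hext]; simpa using hi
    have hPG : ∀ j : Fin 2, G D j ≠ G D' j →
        ext D (Sum.inr (Sum.inl j)) ≠ ext D' (Sum.inr (Sum.inl j)) := by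
      intro j hj; rw [hext, hext]; simpa using hj
    have hdiff : ∀ j : Fin 2, G D j - G D' j = ∑ t, (b j - a t)⁻¹ * (D t - D' t) := by
      intro j
      rw [hG, hG, ← Finset.sum_sub_distrib]
      exact Finset.sum_congr rfl (fun t _ => by ring)
    rcases lt_or_ge 2 s.card with h3 | h2
    · obtain ⟨x, hx, y, hy, z, hz, hxy, hxz, hyz⟩ := Finset.two_lt_card.mp h3
      exact three_le_filter_card _ (Sum.inl x) (Sum.inl y) (Sum.inl z)
        (by simp [hxy]) (by simp [hxz]) (by simp [hyz])
        (hPinl x ((hmem x).mpr hx)) (hPinl y ((hmem y).mpr hy)) (hPinl z ((hmem z).mpr hz))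
    · have h1le : 1 ≤ s.card := Finset.card_pos.mpr hsne
      interval_cases hc : s.card
      · -- card = 1
        obtain ⟨i, hi⟩ := Finset.card_eq_one.mp hc
        have hDi : D i ≠ D' i := (hmem i).mpr (by simp [hi])
        have hGj : ∀ j : Fin 2, G D j ≠ G D' j := by
          intro j hj
          have hsum : (∑ t, (b j - a t)⁻¹ * (D t - D' t)) = (b j - a i)⁻¹ * (D i - D' i) := by
            refine Finset.sum_eq_single i (fun t _ ht => ?_) (fun ht => absurd (Finset.mem_univ i) ht)
            have : D t = D' t := by
              by_contra h
              exact ht (by simpa [hi] using (hmem t).mp h)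
            simp [this]
          have : (b j - a i)⁻¹ * (D i - D' i) = 0 := by
            rw [← hsum, ← hdiff j, hj, sub_self]
          exact (mul_ne_zero (inv_ne_zero (hba j i)) (sub_ne_zero.mpr hDi)) this
        exact three_le_filter_card _ (Sum.inl i) (Sum.inr (Sum.inl 0)) (Sum.inr (Sum.inl 1))
          (by simp) (by simp) (by simp)
          (hPinl i hDi) (hPG 0 (hGj 0)) (hPG 1 (hGj 1))
      · -- card = 2
        obtain ⟨i, k, hik, hik2⟩ := Finset.card_eq_two.mp hc
        have hDi : D i ≠ D' i := (hmem i).mpr (by simp [hik2])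
        have hDk : D k ≠ D' k := (hmem k).mpr (by simp [hik2])
        have hzero : ∀ j : Fin 2, ∀ t ∈ Finset.univ, t ∉ ({i, k} : Finset (Fin 6)) →
            (b j - a t)⁻¹ * (D t - D' t) = 0 := by
          intro j t _ ht
          have : D t = D' t := by
            by_contra h
            exact ht (by simpa [hik2] using (hmem t).mp h)
          simp [this]
        have hGj : ¬ (G D 0 = G D' 0 ∧ G D 1 = G D' 1) := by
          rintro ⟨h0, h1⟩
          have he : ∀ j : Fin 2, (b j - a i)⁻¹ * (D i - D' i) + (b j - a k)⁻¹ * (D k - D' k) = 0 := by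
            intro j
            have hsum : (∑ t, (b j - a t)⁻¹ * (D t - D' t)) =
                ∑ t ∈ ({i, k} : Finset (Fin 6)), (b j - a t)⁻¹ * (D t - D' t) :=
              (Finset.sum_subset (Finset.subset_univ _) (hzero j)).symm
            have hj0 : G D j - G D' j = 0 := by
              fin_cases j <;> simp [h0, h1]
            rw [hdiff j, hsum, Finset.sum_pair hik] at hj0
            exact hj0
          -- clear denominators
          have hcl : ∀ j : Fin 2, (b j - a k) * (D i - D' i) + (b j - a i) * (D k - D' k) = 0 := by
            intro j
            have h := he j
            field_simp [hba j i, hba j k] at h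
            linear_combination h
          have key : (b 0 - b 1) * (a k - a i) * (D i - D' i) = 0 := by
            linear_combination (b 1 - a i) * hcl 0 - (b 0 - a i) * hcl 1
          have := mul_ne_zero (mul_ne_zero hbb (haa k i hik.symm)) (sub_ne_zero.mpr hDi)
          exact this key
        have : ∃ j : Fin 2, G D j ≠ G D' j := by
          by_contra h
          push_neg at h
          exact hGj ⟨h 0, h 1⟩
        obtain ⟨j, hj⟩ := this
        exact three_le_filter_card _ (Sum.inl i) (Sum.inl k) (Sum.inr (Sum.inl j))
          (by simp [hik]) (by simp) (by simp)
          (hPinl i hDi) (hPinl k hDk) (hPG j hj)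
end
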